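/- For every u in the domain {u ∈ H¹((−1,1),ℂ²) : u₂(±1) = ∓u₁(±1)} and parameters k ∈ ℝ, m ≥ 0, the operator T(k,m)u := −iσ₂u' + kσ₁u + mσ₃u satisfies ‖T(k,m)u‖²_{L²} = ‖u'‖²_{L²} + (m²+k²)‖u‖²_{L²} + m(|u(1)|² + |u(−1)|²). -/

import Mathlib

open Real MeasureTheory

noncomputable section

abbrev E2 : Type := EuclideanSpace ℂ (Fin 2)

def vec2 (a b : ℂ) : E2 := WithLp.toLp 2 ![a, b]

def muI : Measure ℝ := volume.restrict (Set.Ioo (-1) 1)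

/-- `f ∈ H¹((-1,1),ℂ²)` with weak derivative `g` and the infinite-mass boundary
conditions `u₂(±1) = ∓u₁(±1)`. -/
def IsH1BC (f g : ℝ → E2) : Prop :=
  MemLp g 2 muI ∧
  (∀ t ∈ Set.Icc (-1 : ℝ) 1, f t = f (-1) + ∫ s in (-1 : ℝ)..t, g s) ∧
  f 1 1 = - f 1 0 ∧ f (-1) 1 = f (-1) 0

/-!
Expanding `|T(k,m)u|²` pointwise, the mixed `km` terms cancel, and besides
`|u'|² + (m² + k²)|u|²` only two derivatives remain: `k (|u₁|² - |u₂|²)'` and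
`-2m (Re u₁ ū₂)'`. Since `u` is absolutely continuous, both integrate to boundary terms.
The first vanishes because `|u₂(±1)| = |u₁(±1)|`; the second gives
`m (|u(1)|² + |u(-1)|²)` because `u₁ ū₂ = ∓|u₁|²` at `±1`.
-/

open Set ComplexConjugate

def IsPrimitiveOn {E : Type*} [NormedAddCommGroup E] [NormedSpace ℝ E] (F f : ℝ → E) (a b : ℝ) :
    Prop :=
  IntervalIntegrable f volume a b ∧ ∀ t ∈ uIcc a b, F t = F a + ∫ s in a..t, f s

theorem re_mul_conj_add_mul_conj (z w u v : ℂ) :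
    (z * conj w + u * conj v).re = (z.re * w.re + u.re * v.re) + (z.im * w.im + u.im * v.im) := by
  simp only [Complex.add_re, Complex.mul_re, Complex.conj_re, Complex.conj_im]
  ring

namespace IsPrimitiveOn

variable {E : Type*} [NormedAddCommGroup E] [NormedSpace ℝ E] {a b : ℝ}

theorem continuousOn {F f : ℝ → E} (hF : IsPrimitiveOn F f a b) : ContinuousOn F (uIcc a b) :=
  (continuousOn_const.add
    (intervalIntegral.continuousOn_primitive_interval' hF.1 left_mem_uIcc)).congr hF.2

theorem map {𝕜 E' : Type*} [RCLike 𝕜] [NormedSpace 𝕜 E] [CompleteSpace E] [NormedAddCommGroup E']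
    [NormedSpace 𝕜 E'] [NormedSpace ℝ E'] [CompleteSpace E'] {F f : ℝ → E}
    (hF : IsPrimitiveOn F f a b) (L : E →L[𝕜] E') :
    IsPrimitiveOn (fun t => L (F t)) (fun t => L (f t)) a b :=
  ⟨⟨L.integrable_comp hF.1.1, L.integrable_comp hF.1.2⟩, fun t ht => by
    dsimp only
    rw [hF.2 t ht, map_add,
      L.intervalIntegral_comp_comm (hF.1.mono_set (uIcc_subset_uIcc_left ht))]⟩

theorem intervalIntegrable_mul_add_mul {F G f g : ℝ → ℝ} (hF : IsPrimitiveOn F f a b)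
    (hG : IsPrimitiveOn G g a b) :
    IntervalIntegrable (fun x => f x * G x + F x * g x) volume a b :=
  (hF.1.mul_continuousOn hG.continuousOn).add (hG.1.continuousOn_mul hF.continuousOn)

theorem integral_mul_add_mul {F G f g : ℝ → ℝ} (hF : IsPrimitiveOn F f a b)
    (hG : IsPrimitiveOn G g a b) :
    ∫ x in a..b, (f x * G x + F x * g x) = F b * G b - F a * G a := by
  have hac {F f : ℝ → ℝ} (hF : IsPrimitiveOn F f a b) :
      AbsolutelyContinuousOnInterval (fun x => F a + ∫ t in a..x, f t) a b :=
    (LipschitzWith.const (F a)).lipschitzOnWith.absolutelyContinuousOnInterval.add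
      (hF.1.absolutelyContinuousOnInterval_intervalIntegral left_mem_uIcc)
  have hderiv {F f : ℝ → ℝ} (hF : IsPrimitiveOn F f a b) :
      ∀ᵐ x, x ∈ uIoc a b → deriv (fun x => F a + ∫ t in a..x, f t) x = f x := by
    filter_upwards [hF.1.ae_hasDerivAt_integral] with x hx hxI
    exact ((hx (uIoc_subset_uIcc hxI) a left_mem_uIcc).const_add _).deriv
  have key := (hac hF).integral_deriv_mul_eq_sub (hac hG)
  simp only [← hF.2 b right_mem_uIcc, ← hG.2 b right_mem_uIcc, intervalIntegral.integral_same,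
    add_zero] at key
  rw [← key]
  refine intervalIntegral.integral_congr_ae ?_
  filter_upwards [hderiv hF, hderiv hG] with x hFx hGx hx
  rw [hFx hx, hGx hx, ← hF.2 x (uIoc_subset_uIcc hx), ← hG.2 x (uIoc_subset_uIcc hx)]

theorem intervalIntegrable_re_mul_conj_add {F G f g : ℝ → ℂ} (hF : IsPrimitiveOn F f a b)
    (hG : IsPrimitiveOn G g a b) :
    IntervalIntegrable (fun x => (f x * conj (G x) + F x * conj (g x)).re) volume a b := by
  simp_rw [re_mul_conj_add_mul_conj]
  exact ((hF.map Complex.reCLM).intervalIntegrable_mul_add_mul (hG.map Complex.reCLM)).add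
    ((hF.map Complex.imCLM).intervalIntegrable_mul_add_mul (hG.map Complex.imCLM))

theorem integral_re_mul_conj_add {F G f g : ℝ → ℂ} (hF : IsPrimitiveOn F f a b)
    (hG : IsPrimitiveOn G g a b) :
    ∫ x in a..b, (f x * conj (G x) + F x * conj (g x)).re =
      (F b * conj (G b)).re - (F a * conj (G a)).re := by
  have hFre : IsPrimitiveOn (fun t => (F t).re) (fun t => (f t).re) a b := hF.map Complex.reCLM
  have hFim : IsPrimitiveOn (fun t => (F t).im) (fun t => (f t).im) a b := hF.map Complex.imCLM
  have hGre : IsPrimitiveOn (fun t => (G t).re) (fun t => (g t).re) a b := hG.map Complex.reCLM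
  have hGim : IsPrimitiveOn (fun t => (G t).im) (fun t => (g t).im) a b := hG.map Complex.imCLM
  simp_rw [re_mul_conj_add_mul_conj]
  rw [intervalIntegral.integral_add (hFre.intervalIntegrable_mul_add_mul hGre)
      (hFim.intervalIntegrable_mul_add_mul hGim),
    hFre.integral_mul_add_mul hGre, hFim.integral_mul_add_mul hGim]
  simp only [Complex.mul_re, Complex.conj_re, Complex.conj_im]
  ring

end IsPrimitiveOn

theorem EuclideanSpace.norm_sq_fin_two {𝕜 : Type*} [RCLike 𝕜] (x : EuclideanSpace 𝕜 (Fin 2)) :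
    ‖x‖ ^ 2 = ‖x 0‖ ^ 2 + ‖x 1‖ ^ 2 := by
  simp [EuclideanSpace.norm_sq_eq, Fin.sum_univ_two]

theorem norm_vec2_sq (z w : ℂ) : ‖vec2 z w‖ ^ 2 = ‖z‖ ^ 2 + ‖w‖ ^ 2 := by
  simp [vec2, EuclideanSpace.norm_sq_fin_two]

theorem norm_sq_transverseDirac (k m : ℝ) (x y : E2) :
    ‖vec2 (-(y 1) + (k : ℂ) * x 1 + (m : ℂ) * x 0) (y 0 + (k : ℂ) * x 0 - (m : ℂ) * x 1)‖ ^ 2 =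
      ‖y‖ ^ 2 + (m ^ 2 + k ^ 2) * ‖x‖ ^ 2
        + k * ((y 0 * conj (x 0) + x 0 * conj (y 0)).re - (y 1 * conj (x 1) + x 1 * conj (y 1)).re)
        - 2 * m * (y 0 * conj (x 1) + x 0 * conj (y 1)).re := by
  rw [norm_vec2_sq, EuclideanSpace.norm_sq_fin_two x, EuclideanSpace.norm_sq_fin_two y]
  simp only [← Complex.normSq_eq_norm_sq, Complex.normSq_apply, Complex.add_re, Complex.add_im,
    Complex.sub_re, Complex.sub_im, Complex.neg_re, Complex.neg_im, Complex.mul_re, Complex.mul_im,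
    Complex.conj_re, Complex.conj_im, Complex.ofReal_re, Complex.ofReal_im]
  ring

instance : IsFiniteMeasure muI := inferInstanceAs (IsFiniteMeasure (volume.restrict _))

theorem intervalIntegrable_of_integrable_muI {E : Type*} [NormedAddCommGroup E] {u : ℝ → E}
    (hu : Integrable u muI) : IntervalIntegrable u volume (-1) 1 := by
  rw [intervalIntegrable_iff_integrableOn_Ioc_of_le (by norm_num),
    integrableOn_Ioc_iff_integrableOn_Ioo]
  exact hu

theorem transverse_dirac_square_identity (k m : ℝ)
    (f g : ℝ → E2) (hfg : IsH1BC f g) :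
    (∫ t in (-1 : ℝ)..1,
        ‖vec2 (-(g t 1) + (k : ℂ) * f t 1 + (m : ℂ) * f t 0)
              (g t 0 + (k : ℂ) * f t 0 - (m : ℂ) * f t 1)‖^2) =
      (∫ t in (-1 : ℝ)..1, ‖g t‖^2) +
        (m^2 + k^2) * (∫ t in (-1 : ℝ)..1, ‖f t‖^2) +
        m * (‖f 1‖^2 + ‖f (-1)‖^2) := by
  obtain ⟨hg, hf, hf1, hfm1⟩ := hfg
  have hprim : IsPrimitiveOn f g (-1) 1 :=
    ⟨intervalIntegrable_of_integrable_muI (hg.integrable one_le_two), by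
      rwa [uIcc_of_le (by norm_num)]⟩
  have h0 : IsPrimitiveOn (fun t => f t 0) (fun t => g t 0) (-1) 1 :=
    hprim.map (EuclideanSpace.proj 0)
  have h1 : IsPrimitiveOn (fun t => f t 1) (fun t => g t 1) (-1) 1 :=
    hprim.map (EuclideanSpace.proj 1)
  have hg2 : IntervalIntegrable (fun t => ‖g t‖ ^ 2) volume (-1) 1 :=
    intervalIntegrable_of_integrable_muI (hg.integrable_norm_pow two_ne_zero)
  have hf2 : IntervalIntegrable (fun t => ‖f t‖ ^ 2) volume (-1) 1 :=
    (hprim.continuousOn.norm.pow 2).intervalIntegrable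
  have h00 := h0.intervalIntegrable_re_mul_conj_add h0
  have h11 := h1.intervalIntegrable_re_mul_conj_add h1
  have h01 := h0.intervalIntegrable_re_mul_conj_add h1
  simp_rw [norm_sq_transverseDirac]
  rw [intervalIntegral.integral_sub ((hg2.add (hf2.const_mul _)).add ((h00.sub h11).const_mul _))
      (h01.const_mul _),
    intervalIntegral.integral_add (hg2.add (hf2.const_mul _)) ((h00.sub h11).const_mul _),
    intervalIntegral.integral_add hg2 (hf2.const_mul _), intervalIntegral.integral_const_mul,
    intervalIntegral.integral_const_mul, intervalIntegral.integral_const_mul,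
    intervalIntegral.integral_sub h00 h11, h0.integral_re_mul_conj_add h0,
    h1.integral_re_mul_conj_add h1, h0.integral_re_mul_conj_add h1,
    EuclideanSpace.norm_sq_fin_two (f 1), EuclideanSpace.norm_sq_fin_two (f (-1)), hf1, hfm1]
  simp only [map_neg, mul_neg, neg_mul, neg_neg, Complex.neg_re, Complex.mul_conj,
    Complex.ofReal_re, Complex.normSq_eq_norm_sq, norm_neg]
  ring
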